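/- Let Γ = G *_φ H be the free product of groups G and H with amalgamated subgroups A ≤ G and B ≤ H with respect to an isomorphism φ : A → B, and let G′ ≤ G and H′ ≤ H be subgroups. If the intersections A′ = G′ ∩ A and B′ = H′ ∩ B are both trivial, then the subgroup Γ′ = ⟨G′, H′⟩ of Γ generated by the images of G′ and H′ is naturally isomorphic to the ordinary free product G′ * H′; that is, the canonical homomorphism from the free product G′ * H′ to Γ is injective with image Γ′. -/

import Mathlib

open Monoid

/-- The relator set `{a · φ(a)⁻¹ : a ∈ A}` identifying `A ≤ G` with `B ≤ H` inside the free
product `G ∗ H`. -/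
def amalgRels {G H : Type} [Group G] [Group H] (A : Subgroup G) (B : Subgroup H)
    (φ : A ≃* B) : Set (Coprod G H) :=
  {w | ∃ a : A, w = Coprod.inl (a : G) * (Coprod.inr ((φ a : H)))⁻¹}

/-- The free product `G ∗_φ H` of `G` and `H` with the subgroups `A ≤ G` and `B ≤ H` amalgamated
along the isomorphism `φ : A → B`, i.e. `⟨G, H | a = φ(a) for all a ∈ A⟩`. -/
abbrev Amalg {G H : Type} [Group G] [Group H] (A : Subgroup G) (B : Subgroup H)
    (φ : A ≃* B) : Type :=
  Coprod G H ⧸ Subgroup.normalClosure (amalgRels A B φ)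

/-- The canonical homomorphism `G →* G ∗_φ H`. -/
def Amalg.inlHom {G H : Type} [Group G] [Group H] (A : Subgroup G) (B : Subgroup H)
    (φ : A ≃* B) : G →* Amalg A B φ :=
  (QuotientGroup.mk' _).comp Coprod.inl

/-- The canonical homomorphism `H →* G ∗_φ H`. -/
def Amalg.inrHom {G H : Type} [Group G] [Group H] (A : Subgroup G) (B : Subgroup H)
    (φ : A ≃* B) : H →* Amalg A B φ :=
  (QuotientGroup.mk' _).comp Coprod.inr

/-!
Realize `G ∗_φ H` as Mathlib's pushout `PushoutI` of the Bool-indexed diagram `A → G`, `A → H`.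
A reduced word of `G′ ∗ H′` stays a reduced word of the pushout (no letter lies in the amalgamated
subgroup, as `G′ ∩ A = H′ ∩ B = 1`), so by the normal form theorem
`PushoutI.Reduced.eq_empty_of_mem_range` it maps to `1` only if it is empty.
-/

open Function

namespace Monoid.CoprodI.Word

variable {ι : Type*} {M N : ι → Type*} [∀ i, Monoid (M i)] [∀ i, Monoid (N i)]

def map (f : ∀ i, M i →* N i) (hf : ∀ i, Injective (f i)) (w : Word M) : Word N where
  toList := w.toList.map fun l => ⟨l.1, f l.1 l.2⟩
  ne_one := by
    simp only [List.mem_map]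
    rintro _ ⟨⟨i, m⟩, hm, rfl⟩ hfm
    exact w.ne_one _ hm (hf i (hfm.trans (map_one _).symm))
  chain_ne := (List.isChain_map _).2 w.chain_ne

theorem prod_map (f : ∀ i, M i →* N i) (hf : ∀ i, Injective (f i)) (w : Word M) :
    (w.map f hf).prod = lift (fun i => of.comp (f i)) w.prod := by
  simp only [prod, map, map_list_prod, List.map_map]
  rfl

theorem map_eq_empty_iff {f : ∀ i, M i →* N i} {hf : ∀ i, Injective (f i)} {w : Word M} :
    w.map f hf = empty ↔ w = empty := by
  simp only [map, empty, Word.ext_iff, List.map_eq_nil_iff]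

end Monoid.CoprodI.Word

namespace Monoid.PushoutI

open CoprodI

variable {ι H : Type*} {G : ι → Type*} [∀ i, Group (G i)] [Group H] {φ : ∀ i, H →* G i}

theorem lift_subtype_injective_of_inf_range_eq_bot (hφ : ∀ i, Injective (φ i))
    (K : ∀ i, Subgroup (G i)) (hK : ∀ i, K i ⊓ (φ i).range = ⊥) :
    Injective (CoprodI.lift fun i => (of (φ := φ) i).comp (K i).subtype) := by
  classical
  rw [injective_iff_map_eq_one]
  intro x hx
  set w := Word.equiv x
  have hwx : w.prod = x := Word.equiv.symm_apply_apply x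
  let w' := w.map (fun i => (K i).subtype) fun i => (K i).subtype_injective
  have hreduced : Reduced φ w' := by
    rintro ⟨i, g⟩ hg hgφ
    simp only [w', Word.map, List.mem_map] at hg
    obtain ⟨⟨i, k⟩, hk, hik⟩ := hg
    cases hik
    have hk1 : (k : G i) ∈ K i ⊓ (φ i).range := ⟨k.2, hgφ⟩
    rw [hK, Subgroup.mem_bot, OneMemClass.coe_eq_one] at hk1
    exact w.ne_one _ hk hk1
  have hprod : ofCoprodI (φ := φ) w'.prod = 1 := by
    have hcomp : (ofCoprodI (φ := φ)).comp
        (CoprodI.lift fun i => CoprodI.of.comp (K i).subtype) =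
        CoprodI.lift fun i => (of i).comp (K i).subtype :=
      CoprodI.ext_hom _ _ fun i => by ext; simp [ofCoprodI_of]
    rw [Word.prod_map, hwx, ← MonoidHom.comp_apply, hcomp, hx]
  have hw : w = .empty :=
    Word.map_eq_empty_iff.1 (hreduced.eq_empty_of_mem_range hφ (hprod ▸ one_mem _))
  rw [← hwx, hw, Word.prod_empty]

end Monoid.PushoutI

namespace Monoid

variable {M : Bool → Type*} [∀ b, Monoid (M b)]

/-- Mathlib builds `Coprod` independently of `CoprodI`; this comparison lets the normal form
theorem for `PushoutI`, phrased with `CoprodI`, reach a binary free product. -/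
def Coprod.toCoprodI : Coprod (M true) (M false) →* CoprodI M :=
  Coprod.lift CoprodI.of CoprodI.of

def CoprodI.toCoprod : CoprodI M →* Coprod (M true) (M false) :=
  CoprodI.lift fun
    | true => Coprod.inl
    | false => Coprod.inr

theorem CoprodI.toCoprod_comp_toCoprodI :
    CoprodI.toCoprod.comp Coprod.toCoprodI = MonoidHom.id (Coprod (M true) (M false)) :=
  Coprod.hom_ext (MonoidHom.ext fun _ => CoprodI.lift_of _ _)
    (MonoidHom.ext fun _ => CoprodI.lift_of _ _)

theorem Coprod.toCoprodI_injective : Injective (Coprod.toCoprodI (M := M)) :=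
  LeftInverse.injective (g := CoprodI.toCoprod) fun x =>
    DFunLike.congr_fun CoprodI.toCoprod_comp_toCoprodI x

end Monoid

universe u

instance Bool.instGroupCond {X Y : Type u} [Group X] [Group Y] : ∀ b, Group (cond b X Y)
  | true => ‹_›
  | false => ‹_›

namespace Amalg

variable {G H : Type} [Group G] [Group H] (A : Subgroup G) (B : Subgroup H) (φ : A ≃* B)

def pushoutDiagram : ∀ b : Bool, A →* cond b G H
  | true => A.subtype
  | false => B.subtype.comp φ.toMonoidHom

theorem pushoutDiagram_injective : ∀ b, Injective (pushoutDiagram A B φ b)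
  | true => A.subtype_injective
  | false => B.subtype_injective.comp φ.injective

theorem range_pushoutDiagram_true : (pushoutDiagram A B φ true).range = A :=
  A.range_subtype

theorem range_pushoutDiagram_false : (pushoutDiagram A B φ false).range = B := by
  simp [pushoutDiagram, MonoidHom.range_comp, ← MonoidHom.range_eq_map]

def toPushoutI : Amalg A B φ →* PushoutI (pushoutDiagram A B φ) :=
  QuotientGroup.lift _
    (Coprod.lift (PushoutI.of (φ := pushoutDiagram A B φ) true)
      (PushoutI.of (φ := pushoutDiagram A B φ) false)) <|
    Subgroup.normalClosure_le_normal <| by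
      rintro _ ⟨a, rfl⟩
      simp only [SetLike.mem_coe, MonoidHom.mem_ker, map_mul, map_inv, Coprod.lift_apply_inl,
        Coprod.lift_apply_inr]
      rw [mul_inv_eq_one]
      exact (PushoutI.of_apply_eq_base _ true a).trans (PushoutI.of_apply_eq_base _ false a).symm

theorem lift_subtype_injective (G' : Subgroup G) (H' : Subgroup H) (hA : G' ⊓ A = ⊥)
    (hB : H' ⊓ B = ⊥) :
    Injective (Coprod.lift ((inlHom A B φ).comp G'.subtype) ((inrHom A B φ).comp H'.subtype)) := by
  let K : ∀ b, Subgroup (cond b G H)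
    | true => G'
    | false => H'
  have hK : ∀ b, K b ⊓ (pushoutDiagram A B φ b).range = ⊥
    | true => by rw [range_pushoutDiagram_true]; exact hA
    | false => by rw [range_pushoutDiagram_false]; exact hB
  have hcomp : (toPushoutI A B φ).comp
      (Coprod.lift ((inlHom A B φ).comp G'.subtype) ((inrHom A B φ).comp H'.subtype)) =
      (CoprodI.lift fun b => (PushoutI.of b).comp (K b).subtype).comp
        (Coprod.toCoprodI (M := fun b => K b)) :=
    Coprod.hom_ext rfl rfl
  refine Injective.of_comp (f := toPushoutI A B φ) ?_
  rw [← MonoidHom.coe_comp, hcomp, MonoidHom.coe_comp]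
  exact (PushoutI.lift_subtype_injective_of_inf_range_eq_bot (pushoutDiagram_injective A B φ) K
    hK).comp Coprod.toCoprodI_injective

end Amalg

/-- **Corollary (1).**  Let `Γ = G ∗_φ H` with amalgamated subgroups `A ≤ G`, `B ≤ H` along
`φ : A ≃ B`, and let `G′ ≤ G`, `H′ ≤ H` be subgroups whose intersections `A′ = G′ ∩ A` and
`B′ = H′ ∩ B` are both trivial.  Then the subgroup `Γ′ = ⟨G′, H′⟩` of `Γ` is naturally isomorphic
to the ordinary free product `G′ ∗ H′`: the canonical homomorphism `G′ ∗ H′ → Γ` is injective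
with range `Γ′`. -/
theorem amalg_subgroup_free_product {G H : Type} [Group G] [Group H]
    (A : Subgroup G) (B : Subgroup H) (φ : A ≃* B)
    (G' : Subgroup G) (H' : Subgroup H)
    (hA : G' ⊓ A = ⊥) (hB : H' ⊓ B = ⊥) :
    Function.Injective
      ⇑(Coprod.lift ((Amalg.inlHom A B φ).comp G'.subtype)
        ((Amalg.inrHom A B φ).comp H'.subtype)) ∧
    (Coprod.lift ((Amalg.inlHom A B φ).comp G'.subtype)
        ((Amalg.inrHom A B φ).comp H'.subtype)).range
      = G'.map (Amalg.inlHom A B φ) ⊔ H'.map (Amalg.inrHom A B φ) := by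
  refine ⟨Amalg.lift_subtype_injective A B φ G' H' hA hB, ?_⟩
  rw [Coprod.range_lift, MonoidHom.range_comp, MonoidHom.range_comp, Subgroup.range_subtype,
    Subgroup.range_subtype]
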